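/- arXiv:2110.06720 — 4 statements merged into one kernel-verified Lean document; each statement's English description precedes it below -/
import Mathlib

section
/- For every complex Hadamard matrix H of size Q ≥ 1, the angle operator Θ_H fixes the identity matrix, Θ_H(I) = I, and its operator norm with respect to the Frobenius norm on M_Q(ℂ) is at most 1; consequently every eigenvalue of Θ_H lies in the interval [0, 1] and 1 is an eigenvalue of Θ_H. -/
/-!
Let `S_{(a,b),(c,d)} = ∑ₘ H_{mc} H̄_{md} H̄_{ma} H_{mb}`, so that `Θ_H` acts on `vec ξ` by the
matrix `Q⁻³ |S|² = Q⁻³ (S ⊙ Sᵀ)`. Writing `V_{m,(c,d)} = H_{mc} H̄_{md}` we have `S = Vᴴ V`, and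
`H Hᴴ = Q·1` gives `V Vᴴ = Q²·1`; hence `S² = Q² S`, while `|H_{ij}| = 1` gives `S_{pp} = Q`.
Consequently every row and column of `|S|²` sums to `(S Sᴴ)_{pp} = Q³`, and the Schur test makes
`Θ_H` a contraction for the Frobenius norm. By the Schur product theorem `S ⊙ Sᵀ` is positive
semidefinite, so the eigenvalues of `Θ_H` are nonnegative reals of modulus at most `1`.
Finally `S_{(a,b),(c,c)} = (Hᴴ H)_{ab} = Q δ_{ab}`, which gives `Θ_H(1) = 1`.
-/

open scoped BigOperators Matrix ComplexOrder

/-- The angle operator on 2-boxes associated to a complex Hadamard matrix `H`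
(of size `Fintype.card n`):
`(Θ_H ξ)_{a,b} = Q⁻³ ∑_{c,d} |∑_m H_{m,c} conj(H_{m,d}) conj(H_{m,a}) H_{m,b}|² ξ_{c,d}`. -/
noncomputable def angleOp {n : Type*} [Fintype n] (H : Matrix n n ℂ) :
    Matrix n n ℂ →ₗ[ℂ] Matrix n n ℂ where
  toFun ξ := Matrix.of fun a b =>
    (((Fintype.card n : ℂ)) ^ 3)⁻¹ *
      ∑ c, ∑ d,
        ((‖∑ m, H m c * (starRingEnd ℂ) (H m d) *
            (starRingEnd ℂ) (H m a) * H m b‖ ^ 2 : ℝ) : ℂ) * ξ c d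
  map_add' ξ η := by
    ext a b
    simp [Matrix.add_apply, mul_add, Finset.sum_add_distrib]
  map_smul' r ξ := by
    ext a b
    simp [Matrix.smul_apply, smul_eq_mul, Finset.mul_sum, mul_comm, mul_assoc, mul_left_comm]

/-- The Frobenius norm `‖x‖ = √(Tr(x* x)) = √(∑_{i,j} |x_{i,j}|²)` on matrices. -/
noncomputable def frobNorm {n : Type*} [Fintype n] (x : Matrix n n ℂ) : ℝ :=
  Real.sqrt (∑ i, ∑ j, ‖x i j‖ ^ 2)


open Matrix ComplexConjugate

namespace Matrix

variable {ι κ 𝕜 : Type*} [Fintype ι] [Fintype κ]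

theorem sum_norm_mulVec_sq_le [SeminormedRing 𝕜] (K : Matrix ι κ 𝕜)
    (hrow : ∀ i, ∑ j, ‖K i j‖ ≤ 1) (hcol : ∀ j, ∑ i, ‖K i j‖ ≤ 1) (x : κ → 𝕜) :
    ∑ i, ‖(K *ᵥ x) i‖ ^ 2 ≤ ∑ j, ‖x j‖ ^ 2 := by
  -- Schur test: Cauchy–Schwarz in each row with weights `‖K i j‖`, then the column bound.
  have hpoint (i : ι) : ‖(K *ᵥ x) i‖ ^ 2 ≤ ∑ j, ‖K i j‖ * ‖x j‖ ^ 2 := calc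
    ‖(K *ᵥ x) i‖ ^ 2 ≤ (∑ j, ‖K i j‖ * ‖x j‖) ^ 2 := by
      gcongr
      exact (norm_sum_le _ _).trans (Finset.sum_le_sum fun j _ => norm_mul_le _ _)
    _ ≤ (∑ j, ‖K i j‖) * ∑ j, ‖K i j‖ * ‖x j‖ ^ 2 :=
      Finset.sum_sq_le_sum_mul_sum_of_sq_le_mul _ (fun _ _ => by positivity)
        (fun _ _ => by positivity) fun _ _ => (by ring : _ = _).le
    _ ≤ ∑ j, ‖K i j‖ * ‖x j‖ ^ 2 :=
      mul_le_of_le_one_left (Finset.sum_nonneg fun _ _ => by positivity) (hrow i)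
  calc ∑ i, ‖(K *ᵥ x) i‖ ^ 2 ≤ ∑ i, ∑ j, ‖K i j‖ * ‖x j‖ ^ 2 :=
      Finset.sum_le_sum fun i _ => hpoint i
    _ = ∑ j, (∑ i, ‖K i j‖) * ‖x j‖ ^ 2 := by rw [Finset.sum_comm]; simp only [Finset.sum_mul]
    _ ≤ ∑ j, ‖x j‖ ^ 2 :=
      Finset.sum_le_sum fun j _ => mul_le_of_le_one_left (by positivity) (hcol j)

theorem norm_le_one_of_mulVec_eq_smul [NormedDivisionRing 𝕜] {A : Matrix ι ι 𝕜}
    (hA : ∀ x, ∑ i, ‖(A *ᵥ x) i‖ ^ 2 ≤ ∑ i, ‖x i‖ ^ 2) {μ : 𝕜} {v : ι → 𝕜} (hv : v ≠ 0)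
    (h : A *ᵥ v = μ • v) : ‖μ‖ ≤ 1 := by
  have hpos : 0 < ∑ i, ‖v i‖ ^ 2 := by
    obtain ⟨i, hi⟩ := Function.ne_iff.mp hv
    exact Finset.sum_pos' (fun _ _ => by positivity)
      ⟨i, Finset.mem_univ _, pow_pos (norm_pos_iff.mpr hi) 2⟩
  have hsq : ‖μ‖ ^ 2 * ∑ i, ‖v i‖ ^ 2 ≤ 1 * ∑ i, ‖v i‖ ^ 2 := by
    simpa [h, norm_mul, mul_pow, Finset.mul_sum] using hA v
  exact (pow_le_one_iff_of_nonneg (norm_nonneg μ) two_ne_zero).mp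
    (le_of_mul_le_mul_right hsq hpos)

theorem PosSemidef.nonneg_of_mulVec_eq_smul {A : Matrix ι ι ℂ} (hA : A.PosSemidef) {μ : ℂ}
    {v : ι → ℂ} (hv : v ≠ 0) (h : A *ᵥ v = μ • v) : 0 ≤ μ := by
  have hr : 0 < star v ⬝ᵥ v := dotProduct_star_self_pos_iff.mpr hv
  have hμr : 0 ≤ μ * (star v ⬝ᵥ v) := by
    simpa [h, dotProduct_smul] using hA.dotProduct_mulVec_nonneg v
  simpa [hr.ne'] using mul_nonneg hμr (inv_nonneg.mpr hr.le)

end Matrix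

lemma Complex.le_one_of_nonneg_of_norm_le_one {z : ℂ} (h0 : 0 ≤ z) (h1 : ‖z‖ ≤ 1) : z ≤ 1 := by
  obtain ⟨r, hr, rfl⟩ := RCLike.nonneg_iff_exists_ofReal.mp h0
  rw [RCLike.norm_ofReal, abs_of_nonneg hr] at h1
  simpa using (RCLike.ofReal_le_ofReal (K := ℂ)).mpr h1

lemma Complex.mul_conj_eq_one_of_norm_eq_one {z : ℂ} (hz : ‖z‖ = 1) : z * conj z = 1 := by
  rw [Complex.mul_conj', hz]
  simp

section Profile

variable {n : Type*} [Fintype n] {H : Matrix n n ℂ}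

noncomputable def rowOuterProducts (H : Matrix n n ℂ) : Matrix n (n × n) ℂ :=
  of fun m p => H m p.1 * conj (H m p.2)

noncomputable def hadamardProfile (H : Matrix n n ℂ) : Matrix (n × n) (n × n) ℂ :=
  (rowOuterProducts H)ᴴ * rowOuterProducts H

noncomputable def angleMatrix (H : Matrix n n ℂ) : Matrix (n × n) (n × n) ℂ :=
  ((Fintype.card n : ℂ) ^ 3)⁻¹ • (hadamardProfile H ⊙ (hadamardProfile H)ᵀ)

lemma hadamardProfile_apply (a b c d : n) :
    hadamardProfile H (a, b) (c, d) = ∑ m, H m c * conj (H m d) * conj (H m a) * H m b := by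
  simp only [hadamardProfile, rowOuterProducts, mul_apply, conjTranspose_apply, of_apply,
    RCLike.star_def, map_mul, Complex.conj_conj]
  exact Finset.sum_congr rfl fun m _ => by ring

lemma isHermitian_hadamardProfile (H : Matrix n n ℂ) : (hadamardProfile H).IsHermitian :=
  isHermitian_conjTranspose_mul_self _

lemma posSemidef_hadamardProfile (H : Matrix n n ℂ) : (hadamardProfile H).PosSemidef :=
  posSemidef_conjTranspose_mul_self _

lemma hadamardProfile_apply_self (hunit : ∀ i j, ‖H i j‖ = 1) (p : n × n) :
    hadamardProfile H p p = Fintype.card n := by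
  obtain ⟨a, b⟩ := p
  have hterm (m : n) : H m a * conj (H m b) * conj (H m a) * H m b = 1 := calc
    H m a * conj (H m b) * conj (H m a) * H m b
        = (H m a * conj (H m a)) * (H m b * conj (H m b)) := by ring
    _ = 1 := by
        rw [Complex.mul_conj_eq_one_of_norm_eq_one (hunit m a),
          Complex.mul_conj_eq_one_of_norm_eq_one (hunit m b), one_mul]
  simp [hadamardProfile_apply, hterm]

lemma angleMatrix_apply (p q : n × n) :
    angleMatrix H p q =
      ((Fintype.card n : ℂ) ^ 3)⁻¹ * ((‖hadamardProfile H p q‖ ^ 2 : ℝ) : ℂ) := by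
  rw [angleMatrix, Matrix.smul_apply, hadamard_apply, transpose_apply,
    ← (isHermitian_hadamardProfile H).apply q p, smul_eq_mul, RCLike.star_def, Complex.mul_conj,
    Complex.normSq_eq_norm_sq]

lemma norm_angleMatrix_apply (p q : n × n) :
    ‖angleMatrix H p q‖ = ‖hadamardProfile H p q‖ ^ 2 / (Fintype.card n : ℝ) ^ 3 := by
  rw [angleMatrix_apply, norm_mul, norm_inv, norm_pow, Complex.norm_natCast, Complex.norm_real,
    Real.norm_of_nonneg (by positivity), inv_mul_eq_div]

lemma posSemidef_angleMatrix (H : Matrix n n ℂ) : (angleMatrix H).PosSemidef :=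
  ((posSemidef_hadamardProfile H).hadamard (posSemidef_hadamardProfile H).transpose).smul
    (inv_nonneg.mpr (by positivity))

lemma angleOp_apply (H x : Matrix n n ℂ) (a b : n) :
    angleOp H x a b = ∑ c, ∑ d, angleMatrix H (a, b) (c, d) * x c d := by
  simp only [angleOp, LinearMap.coe_mk, AddHom.coe_mk, of_apply, angleMatrix_apply,
    hadamardProfile_apply, Finset.mul_sum, mul_assoc]

lemma uncurry_angleOp (H x : Matrix n n ℂ) :
    Function.uncurry (angleOp H x) = angleMatrix H *ᵥ Function.uncurry x := by
  ext ⟨a, b⟩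
  rw [mulVec, dotProduct, Fintype.sum_prod_type]
  exact angleOp_apply H x a b

lemma frobNorm_eq_sqrt_sum_uncurry (x : Matrix n n ℂ) :
    frobNorm x = Real.sqrt (∑ p, ‖Function.uncurry x p‖ ^ 2) := by
  rw [frobNorm, Fintype.sum_prod_type]
  rfl

end Profile

section ComplexHadamard

variable {n : Type*} [Fintype n] [DecidableEq n] {H : Matrix n n ℂ}

lemma conjTranspose_mul_self_eq_card_smul (hH : H * Hᴴ = (Fintype.card n : ℂ) • 1) :
    Hᴴ * H = (Fintype.card n : ℂ) • 1 := by
  rcases isEmpty_or_nonempty n with hn | hn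
  · ext i
    exact isEmptyElim i
  have hQ : (Fintype.card n : ℂ) ≠ 0 := by exact_mod_cast Fintype.card_ne_zero
  have hinv : ((Fintype.card n : ℂ)⁻¹ • Hᴴ) * H = 1 :=
    mul_eq_one_comm.mp (by rw [mul_smul_comm, hH, smul_smul, inv_mul_cancel₀ hQ, one_smul])
  rw [← hinv, smul_mul_assoc, smul_smul, mul_inv_cancel₀ hQ, one_smul]

lemma rowOuterProducts_mul_conjTranspose (hH : H * Hᴴ = (Fintype.card n : ℂ) • 1) :
    rowOuterProducts H * (rowOuterProducts H)ᴴ = ((Fintype.card n : ℂ) ^ 2) • 1 := by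
  have hrow (m m' : n) :
      ∑ c, H m c * conj (H m' c) = if m = m' then (Fintype.card n : ℂ) else 0 := by
    simpa [mul_apply, one_apply] using congrFun (congrFun hH m) m'
  ext m m'
  calc (rowOuterProducts H * (rowOuterProducts H)ᴴ) m m'
      = (∑ c, H m c * conj (H m' c)) * conj (∑ d, H m d * conj (H m' d)) := by
        simp only [mul_apply, conjTranspose_apply, rowOuterProducts, of_apply,
          Fintype.sum_prod_type, RCLike.star_def, map_sum, map_mul, Complex.conj_conj,
          Finset.sum_mul_sum]
        exact Finset.sum_congr rfl fun c _ => Finset.sum_congr rfl fun d _ => by ring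
    _ = _ := by
        rw [hrow]
        split_ifs with h <;> simp [h, sq]

lemma hadamardProfile_mul_self (hH : H * Hᴴ = (Fintype.card n : ℂ) • 1) :
    hadamardProfile H * hadamardProfile H = ((Fintype.card n : ℂ) ^ 2) • hadamardProfile H := by
  rw [hadamardProfile, Matrix.mul_assoc, ← Matrix.mul_assoc (rowOuterProducts H),
    rowOuterProducts_mul_conjTranspose hH, smul_mul, Matrix.one_mul, Matrix.mul_smul]

lemma sum_norm_sq_hadamardProfile_right (hunit : ∀ i j, ‖H i j‖ = 1)
    (hH : H * Hᴴ = (Fintype.card n : ℂ) • 1) (p : n × n) :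
    ∑ q, ‖hadamardProfile H p q‖ ^ 2 = (Fintype.card n : ℝ) ^ 3 := by
  have hdiag : ((∑ q, ‖hadamardProfile H p q‖ ^ 2 : ℝ) : ℂ) =
      (hadamardProfile H * (hadamardProfile H)ᴴ) p p := by
    simp [mul_apply, Complex.mul_conj']
  rw [(isHermitian_hadamardProfile H).eq, hadamardProfile_mul_self hH, Matrix.smul_apply,
    hadamardProfile_apply_self hunit, smul_eq_mul, ← pow_succ] at hdiag
  exact_mod_cast hdiag

lemma sum_norm_sq_hadamardProfile_left (hunit : ∀ i j, ‖H i j‖ = 1)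
    (hH : H * Hᴴ = (Fintype.card n : ℂ) • 1) (q : n × n) :
    ∑ p, ‖hadamardProfile H p q‖ ^ 2 = (Fintype.card n : ℝ) ^ 3 := by
  rw [← sum_norm_sq_hadamardProfile_right hunit hH q]
  exact Finset.sum_congr rfl fun p _ => by
    rw [← (isHermitian_hadamardProfile H).apply p q, norm_star]

lemma sum_norm_angleMatrix_row (hunit : ∀ i j, ‖H i j‖ = 1)
    (hH : H * Hᴴ = (Fintype.card n : ℂ) • 1) (p : n × n) : ∑ q, ‖angleMatrix H p q‖ = 1 := by
  have hQ : (Fintype.card n : ℝ) ≠ 0 := by exact_mod_cast (Fintype.card_pos_iff.mpr ⟨p.1⟩).ne'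
  simp_rw [norm_angleMatrix_apply, ← Finset.sum_div, sum_norm_sq_hadamardProfile_right hunit hH,
    div_self (pow_ne_zero 3 hQ)]

lemma sum_norm_angleMatrix_col (hunit : ∀ i j, ‖H i j‖ = 1)
    (hH : H * Hᴴ = (Fintype.card n : ℂ) • 1) (q : n × n) : ∑ p, ‖angleMatrix H p q‖ = 1 := by
  have hQ : (Fintype.card n : ℝ) ≠ 0 := by exact_mod_cast (Fintype.card_pos_iff.mpr ⟨q.1⟩).ne'
  simp_rw [norm_angleMatrix_apply, ← Finset.sum_div, sum_norm_sq_hadamardProfile_left hunit hH,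
    div_self (pow_ne_zero 3 hQ)]

lemma sum_norm_angleMatrix_mulVec_sq_le (hunit : ∀ i j, ‖H i j‖ = 1)
    (hH : H * Hᴴ = (Fintype.card n : ℂ) • 1) (v : n × n → ℂ) :
    ∑ p, ‖(angleMatrix H *ᵥ v) p‖ ^ 2 ≤ ∑ p, ‖v p‖ ^ 2 :=
  (angleMatrix H).sum_norm_mulVec_sq_le (fun p => (sum_norm_angleMatrix_row hunit hH p).le)
    (fun q => (sum_norm_angleMatrix_col hunit hH q).le) v

theorem frobNorm_angleOp_le (hunit : ∀ i j, ‖H i j‖ = 1)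
    (hH : H * Hᴴ = (Fintype.card n : ℂ) • 1) (x : Matrix n n ℂ) :
    frobNorm (angleOp H x) ≤ frobNorm x := by
  rw [frobNorm_eq_sqrt_sum_uncurry, frobNorm_eq_sqrt_sum_uncurry, uncurry_angleOp]
  exact Real.sqrt_le_sqrt (sum_norm_angleMatrix_mulVec_sq_le hunit hH _)

theorem angleOp_one (hunit : ∀ i j, ‖H i j‖ = 1) (hH : H * Hᴴ = (Fintype.card n : ℂ) • 1) :
    angleOp H 1 = 1 := by
  have hdiag (a b c : n) : hadamardProfile H (a, b) (c, c) = (Hᴴ * H) a b := by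
    rw [hadamardProfile_apply, mul_apply]
    refine Finset.sum_congr rfl fun m _ => ?_
    rw [conjTranspose_apply, RCLike.star_def]
    linear_combination
      (conj (H m a) * H m b) * Complex.mul_conj_eq_one_of_norm_eq_one (hunit m c)
  ext a b
  simp only [angleOp_apply, one_apply, mul_ite, mul_one, mul_zero, Finset.sum_ite_eq,
    Finset.mem_univ, if_true, angleMatrix_apply, hdiag, conjTranspose_mul_self_eq_card_smul hH,
    Matrix.smul_apply, smul_eq_mul]
  split_ifs with hab
  · have hQ : (Fintype.card n : ℂ) ≠ 0 := by exact_mod_cast (Fintype.card_pos_iff.mpr ⟨a⟩).ne'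
    simp only [Complex.norm_natCast, Finset.sum_const, Finset.card_univ, nsmul_eq_mul]
    push_cast
    field_simp
  · simp

theorem mem_Icc_of_hasEigenvalue_angleOp (hunit : ∀ i j, ‖H i j‖ = 1)
    (hH : H * Hᴴ = (Fintype.card n : ℂ) • 1) {μ : ℂ}
    (hμ : Module.End.HasEigenvalue (angleOp H) μ) : μ ∈ Set.Icc 0 1 := by
  obtain ⟨x, hx, hx0⟩ := hμ.exists_hasEigenvector
  have hvec : angleMatrix H *ᵥ Function.uncurry x = μ • Function.uncurry x := by
    rw [← uncurry_angleOp, Module.End.mem_eigenspace_iff.mp hx]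
    rfl
  have hne : Function.uncurry x ≠ 0 := fun h => hx0 (by ext a b; exact congrFun h (a, b))
  have hμ0 := (posSemidef_angleMatrix H).nonneg_of_mulVec_eq_smul hne hvec
  exact ⟨hμ0, Complex.le_one_of_nonneg_of_norm_le_one hμ0
    (norm_le_one_of_mulVec_eq_smul (sum_norm_angleMatrix_mulVec_sq_le hunit hH) hne hvec)⟩

end ComplexHadamard

/-- For every complex Hadamard matrix `H` of size `Q ≥ 1`, the angle operator fixes the
identity matrix, its operator norm with respect to the Frobenius norm is at most `1`;
consequently every eigenvalue of `Θ_H` lies in `[0, 1]`, and `1` is an eigenvalue of `Θ_H`. -/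
theorem angleOp_fixes_one_norm_le_one_eigenvalues
    (Q : ℕ) (hQ : 1 ≤ Q) (H : Matrix (Fin Q) (Fin Q) ℂ)
    (h_unimodular : ∀ i j, ‖H i j‖ = 1)
    (h_hadamard : H * Hᴴ = (Q : ℂ) • (1 : Matrix (Fin Q) (Fin Q) ℂ)) :
    angleOp H (1 : Matrix (Fin Q) (Fin Q) ℂ) = 1 ∧
    (∀ x : Matrix (Fin Q) (Fin Q) ℂ, frobNorm (angleOp H x) ≤ frobNorm x) ∧
    (∀ μ : ℂ, Module.End.HasEigenvalue
        (angleOp H : Module.End ℂ (Matrix (Fin Q) (Fin Q) ℂ)) μ →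
      μ ∈ Set.Icc (0 : ℂ) 1) ∧
    Module.End.HasEigenvalue (angleOp H : Module.End ℂ (Matrix (Fin Q) (Fin Q) ℂ)) 1 := by
  have hH : H * Hᴴ = (Fintype.card (Fin Q) : ℂ) • 1 := by rwa [Fintype.card_fin]
  have hone : angleOp H 1 = 1 := angleOp_one h_unimodular hH
  have : NeZero Q := ⟨by omega⟩
  refine ⟨hone, frobNorm_angleOp_le h_unimodular hH,
    fun μ hμ => mem_Icc_of_hasEigenvalue_angleOp h_unimodular hH hμ, ?_⟩
  exact Module.End.hasEigenvalue_of_hasEigenvector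
    ⟨Module.End.mem_eigenspace_iff.mpr (by rw [hone, one_smul]), one_ne_zero⟩
end

section
/- Let H be a complex Hilbert space and T a bounded self-adjoint operator on H. Suppose (V_n)_{n∈ℕ} is an increasing sequence of finite-dimensional subspaces of H, each invariant under T, whose union is dense in H. Then the spectrum of T equals the closure of the union over n of the spectra of the restrictions T|_{V_n} (each restriction being an operator on the finite-dimensional space V_n, whose spectrum is its set of eigenvalues). -/
/-!
Every eigenvalue of a restriction `T|_{V n}` is an eigenvalue of `T`, and the spectrum of `T` is
closed, which gives one inclusion. Conversely, if `l` keeps distance `δ > 0` from all eigenvalues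
of all restrictions, diagonalising each symmetric restriction in an orthonormal eigenbasis gives
`δ ‖x‖ ≤ ‖T x - l • x‖` on `⋃ n, V n`, hence on all of `E` by density. A normal operator that is
bounded below is invertible, because its range is closed and its orthogonal complement is the
kernel; so `l` is not in the spectrum of `T`.
-/

namespace Module.End

theorem HasEigenvalue.of_restrict {R M : Type*} [CommRing R] [AddCommGroup M] [Module R M]
    {f : End R M} {p : Submodule R M} {hfp : ∀ x ∈ p, f x ∈ p} {μ : R}
    (h : HasEigenvalue (f.restrict hfp) μ) : HasEigenvalue f μ := by
  obtain ⟨x, hx⟩ := h.exists_hasEigenvector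
  exact hasEigenvalue_of_hasEigenvector (x := x)
    ⟨eigenspace_restrict_le_eigenspace f hfp μ ⟨x, hx.1, rfl⟩, by simpa using hx.2⟩

theorem spectrum_restrict_subset {K V : Type*} [Field K] [AddCommGroup V] [Module K V]
    {f : End K V} {p : Submodule K V} [FiniteDimensional K p] (hfp : ∀ x ∈ p, f x ∈ p) :
    spectrum K (f.restrict hfp) ⊆ spectrum K f := fun _ hμ =>
  (hasEigenvalue_iff_mem_spectrum.mpr hμ).of_restrict.mem_spectrum

end Module.End

theorem LinearMap.IsSymmetric.mul_norm_le_norm_sub_smul {𝕜 F : Type*} [RCLike 𝕜]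
    [NormedAddCommGroup F] [InnerProductSpace 𝕜 F] [FiniteDimensional 𝕜 F] {f : F →ₗ[𝕜] F}
    (hf : f.IsSymmetric) {l : 𝕜} {δ : ℝ} (hδ : 0 ≤ δ) (h : ∀ μ ∈ spectrum 𝕜 f, δ ≤ ‖μ - l‖)
    (x : F) : δ * ‖x‖ ≤ ‖f x - l • x‖ := by
  let b := hf.eigenvectorBasis rfl
  have hcoord : ∀ i, b.repr (f x - l • x) i = (hf.eigenvalues rfl i - l) * b.repr x i := by
    intro i
    simp only [map_sub, map_smul, PiLp.sub_apply, PiLp.smul_apply, smul_eq_mul,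
      hf.eigenvectorBasis_apply_self_apply, sub_mul, b]
  rw [← b.repr.norm_map x, ← b.repr.norm_map (f x - l • x), EuclideanSpace.norm_eq,
    EuclideanSpace.norm_eq, ← Real.sqrt_sq hδ, ← Real.sqrt_mul (by positivity), Finset.mul_sum]
  gcongr with i
  rw [hcoord, norm_mul, mul_pow]
  gcongr
  exact h _ (Module.End.hasEigenvalue_iff_mem_spectrum.mp (hf.hasEigenvalue_eigenvalues rfl i))

namespace IsStarNormal

open ContinuousLinearMap

variable {E : Type*} [NormedAddCommGroup E] [InnerProductSpace ℂ E] [CompleteSpace E]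

theorem isUnit_of_antilipschitz {S : E →L[ℂ] E} (hS : IsStarNormal S) {K : NNReal}
    (hK : AntilipschitzWith K S) : IsUnit S := by
  rw [isUnit_iff_bijective, bijective_iff_dense_range_and_antilipschitz]
  refine ⟨?_, K, hK⟩
  rw [Submodule.topologicalClosure_eq_top_iff, hS.orthogonal_range, LinearMap.ker_eq_bot]
  exact hK.injective

theorem notMem_spectrum_of_mul_norm_le_norm_sub_smul {T : E →L[ℂ] E} [IsStarNormal T] {l : ℂ}
    {δ : ℝ} (hδ : 0 < δ) (h : ∀ x, δ * ‖x‖ ≤ ‖T x - l • x‖) : l ∉ spectrum ℂ T := by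
  have : IsStarNormal (algebraMap ℂ (E →L[ℂ] E) l) := ⟨Algebra.commute_algebraMap_right l _⟩
  refine spectrum.notMem_iff.mpr <| isUnit_of_antilipschitz
    (Algebra.commute_algebraMap_left l _).isStarNormal_sub (K := ⟨δ⁻¹, by positivity⟩) ?_
  refine antilipschitz_of_bound _ fun x => ?_
  show ‖x‖ ≤ δ⁻¹ * _
  rw [sub_apply, ContinuousLinearMap.algebraMap_apply, norm_sub_rev, le_inv_mul_iff₀ hδ]
  exact h x

end IsStarNormal

theorem spectrum_eq_closure_iUnion_spectrum_restrict_general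
    {E : Type*} [NormedAddCommGroup E] [InnerProductSpace ℂ E] [CompleteSpace E]
    (T : E →L[ℂ] E) (hT : IsSelfAdjoint T)
    (V : ℕ → Submodule ℂ E)
    (hfd : ∀ n, FiniteDimensional ℂ (V n))
    (hinv : ∀ n, ∀ x ∈ V n, T x ∈ V n)
    (hdense : Dense (⋃ n, (V n : Set E))) :
    spectrum ℂ T =
      closure (⋃ n, spectrum ℂ ((T : E →ₗ[ℂ] E).restrict (hinv n))) := by
  refine subset_antisymm (fun l hl => ?_) <| closure_minimal
    (Set.iUnion_subset fun n =>
      ContinuousLinearMap.spectrum_eq (f := T) ▸ Module.End.spectrum_restrict_subset (hinv n))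
    (spectrum.isClosed T)
  by_contra hl_closure
  obtain ⟨δ, hδ, hball⟩ := Metric.isOpen_iff.mp isClosed_closure.isOpen_compl l hl_closure
  have hgap : ∀ n, ∀ μ ∈ spectrum ℂ ((T : E →ₗ[ℂ] E).restrict (hinv n)), δ ≤ ‖μ - l‖ :=
    fun n μ hμ => not_lt.mp fun hlt =>
      hball (mem_ball_iff_norm.mpr hlt) (subset_closure (Set.mem_iUnion_of_mem n hμ))
  have hbound : ∀ x, δ * ‖x‖ ≤ ‖T x - l • x‖ := by
    refine hdense.induction (fun x hx => ?_) (isClosed_le (by fun_prop) (by fun_prop))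
    obtain ⟨n, hxn⟩ := Set.mem_iUnion.mp hx
    exact (hT.isSymmetric.restrict_invariant (hinv n)).mul_norm_le_norm_sub_smul hδ.le (hgap n)
      ⟨x, hxn⟩
  have := hT.isStarNormal
  exact IsStarNormal.notMem_spectrum_of_mul_norm_le_norm_sub_smul hδ hbound hl

/-- Let `T` be a bounded self-adjoint operator on a complex Hilbert space `E`, and let
`(V n)` be an increasing sequence of finite-dimensional `T`-invariant subspaces whose
union is dense.  Then the spectrum of `T` is the closure of the union of the spectra of
the restrictions `T|_{V n}`. -/
theorem spectrum_eq_closure_iUnion_spectrum_restrict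
    {E : Type*} [NormedAddCommGroup E] [InnerProductSpace ℂ E] [CompleteSpace E]
    (T : E →L[ℂ] E) (hT : IsSelfAdjoint T)
    (V : ℕ → Submodule ℂ E) (hmono : Monotone V)
    (hfd : ∀ n, FiniteDimensional ℂ (V n))
    (hinv : ∀ n, ∀ x ∈ V n, T x ∈ V n)
    (hdense : Dense (⋃ n, (V n : Set E))) :
    spectrum ℂ T =
      closure (⋃ n, spectrum ℂ ((T : E →ₗ[ℂ] E).restrict (hinv n))) :=
  spectrum_eq_closure_iUnion_spectrum_restrict_general T hT V hfd hinv hdense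
end

section
/- Let n ≥ 1 and let A : ℝ → M_n(ℂ) be a continuous map such that A(t) is Hermitian for every t. If the map t ↦ σ(A(t)) is not constant (i.e. there exist s, t with σ(A(s)) ≠ σ(A(t))), then the set {t ∈ ℝ : some eigenvalue λ of A(t) is not an algebraic integer, i.e. λ is not integral over ℤ} is uncountable. -/
/-!
Each coefficient of the characteristic polynomial of `A t` is a continuous function of `t`.
Off the countable exceptional set every eigenvalue of `A t` is an algebraic integer, hence so is
every coefficient, a symmetric function of the eigenvalues. A coefficient therefore takes only
countably many values, and a continuous function on `ℝ` with countable range is constant. So the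
characteristic polynomial, and with it the spectrum, does not depend on `t`.
-/

open scoped Matrix

/-- The spectrum of a matrix `A ∈ M_n(ℂ)`, viewed as a subset of `ℝ` (for Hermitian `A`
this is the set of its real eigenvalues). -/
def realSpectrum {n : ℕ} (A : Matrix (Fin n) (Fin n) ℂ) : Set ℝ :=
  {x : ℝ | (x : ℂ) ∈ spectrum ℂ A}

theorem Continuous.eq_of_countable_range {X Y : Type*} [TopologicalSpace X] [PreconnectedSpace X]
    [MetricSpace Y] {f : X → Y} (hf : Continuous f) (h : (Set.range f).Countable) (x y : X) :
    f x = f y :=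
  h.isTotallyDisconnected _ subset_rfl (isPreconnected_range hf) ⟨x, rfl⟩ ⟨y, rfl⟩

theorem Continuous.matrix_charpoly_coeff {X R n : Type*} [TopologicalSpace X] [CommRing R]
    [TopologicalSpace R] [IsTopologicalRing R] [Fintype n] [DecidableEq n]
    {A : X → Matrix n n R} (hA : Continuous A) (k : ℕ) :
    Continuous fun x => (A x).charpoly.coeff k := by
  have hcoeff (x : X) : (A x).charpoly.coeff k =
      MvPolynomial.eval (fun ij : n × n => A x ij.1 ij.2) ((Matrix.charpoly.univ R n).coeff k) := by
    have := Matrix.charpoly.univ_coeff_eval₂Hom n (RingHom.id R) (fun ij => A x ij.1 ij.2) k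
    rw [show Matrix.of (Function.curry fun ij : n × n => A x ij.1 ij.2) = A x from rfl] at this
    exact this.symm
  simp only [hcoeff]
  exact MvPolynomial.continuous_eval _ |>.comp <|
    continuous_pi fun ij => hA.matrix_elem ij.1 ij.2

namespace Matrix.IsHermitian

variable {n : Type*} [Fintype n] [DecidableEq n] {A : Matrix n n ℂ}

theorem ofReal_eigenvalues_mem_spectrum (hA : A.IsHermitian) (i : n) :
    (hA.eigenvalues i : ℂ) ∈ spectrum ℂ A := by
  simpa using spectrum.algebraMap_mem (S := ℂ) (hA.eigenvalues_mem_spectrum_real i)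

theorem isIntegral_charpoly_coeff (hA : A.IsHermitian)
    (h : ∀ x : ℝ, (x : ℂ) ∈ spectrum ℂ A → IsIntegral ℤ x) (k : ℕ) :
    IsIntegral ℤ (A.charpoly.coeff k) := by
  rw [hA.charpoly_eq]
  refine Polynomial.isIntegral_coeff_prod _ _ (fun i _ j => ?_) k
  have hμ : IsIntegral ℤ (hA.eigenvalues i : ℂ) := by
    simpa using (h _ (hA.ofReal_eigenvalues_mem_spectrum i)).algebraMap (B := ℂ)
  rw [Polynomial.coeff_sub, Polynomial.coeff_X, Polynomial.coeff_C]
  refine .sub ?_ ?_ <;> split_ifs <;> simp [hμ, isIntegral_one, isIntegral_zero]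

end Matrix.IsHermitian

theorem realSpectrum_eq_of_charpoly_eq {n : ℕ} {A B : Matrix (Fin n) (Fin n) ℂ}
    (h : A.charpoly = B.charpoly) : realSpectrum A = realSpectrum B := by
  ext x
  simp only [realSpectrum, Set.mem_ofPred_eq, Matrix.mem_spectrum_iff_isRoot_charpoly, h]

theorem uncountably_many_nonalgebraic_eigenvalues_general
    (n : ℕ) (A : ℝ → Matrix (Fin n) (Fin n) ℂ)
    (hcont : Continuous A) (hherm : ∀ t, (A t).IsHermitian)
    (hnonconst : ∃ s t : ℝ, realSpectrum (A s) ≠ realSpectrum (A t)) :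
    ¬ Set.Countable
      {t : ℝ | ∃ x : ℝ, (x : ℂ) ∈ spectrum ℂ (A t) ∧ ¬ IsIntegral ℤ x} := by
  intro hS
  have hcoeff (k : ℕ) (s t : ℝ) : (A s).charpoly.coeff k = (A t).charpoly.coeff k := by
    refine (hcont.matrix_charpoly_coeff k).eq_of_countable_range ?_ s t
    refine ((hS.image fun u => (A u).charpoly.coeff k).union (Algebraic.countable ℤ ℂ)).mono ?_
    rintro _ ⟨u, rfl⟩
    by_cases hu : ∃ x : ℝ, (x : ℂ) ∈ spectrum ℂ (A u) ∧ ¬ IsIntegral ℤ x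
    · exact Or.inl ⟨u, hu, rfl⟩
    · push Not at hu
      exact Or.inr ((hherm u).isIntegral_charpoly_coeff hu k).isAlgebraic
  obtain ⟨s, t, hst⟩ := hnonconst
  exact hst (realSpectrum_eq_of_charpoly_eq (Polynomial.ext fun k => hcoeff k s t))

/-- If `A : ℝ → M_n(ℂ)` is a continuous family of Hermitian matrices whose spectrum is
not constant, then uncountably many `t` admit an eigenvalue of `A t` which is not an
algebraic integer (i.e. not integral over `ℤ`). -/
theorem uncountably_many_nonalgebraic_eigenvalues
    (n : ℕ) (hn : 1 ≤ n) (A : ℝ → Matrix (Fin n) (Fin n) ℂ)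
    (hcont : Continuous A) (hherm : ∀ t, (A t).IsHermitian)
    (hnonconst : ∃ s t : ℝ, realSpectrum (A s) ≠ realSpectrum (A t)) :
    ¬ Set.Countable
      {t : ℝ | ∃ x : ℝ, (x : ℂ) ∈ spectrum ℂ (A t) ∧ ¬ IsIntegral ℤ x} :=
  uncountably_many_nonalgebraic_eigenvalues_general n A hcont hherm hnonconst
end

section
/- Let q be a prime power with q ≡ 1 (mod 4), let 𝔽_q be the finite field with q elements, and let χ : 𝔽_q → ℤ be the quadratic character (χ(0) = 0, χ(x) = 1 if x is a nonzero square, χ(x) = −1 otherwise). Let C be the (q+1)×(q+1) matrix indexed by {∞} ∪ 𝔽_q with C_{∞,∞} = 0, C_{∞,b} = C_{a,∞} = 1 for a, b ∈ 𝔽_q, and C_{a,b} = χ(a − b) for a, b ∈ 𝔽_q. Let H₊ = [[1,1],[1,−1]] and H₋ = [[1,−1],[−1,−1]]. Then the Paley type II matrix H = C ⊗ H₊ + I_{q+1} ⊗ H₋ (Kronecker product), of size 2(q+1), is a real Hadamard matrix: every entry of H is 1 or −1, and H·Hᵀ = 2(q+1)·I. -/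
/-! For `q ≡ 1 (mod 4)` we have `χ(-1) = 1`, so `C` is symmetric. For `a ≠ b` in `𝔽_q` the
correlation `∑_c χ(a - c) χ(b - c)` is a Jacobi sum and equals `-1`, cancelling the `1` contributed
by the column `∞`; hence `C Cᵀ = q I`. Since `H₊H₊ᵀ = H₋H₋ᵀ = 2I` and `H₊H₋ᵀ + H₋H₊ᵀ = 0`, the
cross terms of `H Hᵀ` collapse to `C ⊗ (H₊H₋ᵀ + H₋H₊ᵀ) = 0`, leaving `q I ⊗ 2I + I ⊗ 2I`.
As `C` has zero diagonal and `±1` off it, every entry of `H` comes from exactly one summand and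
is `±1`. -/

open scoped Matrix Kronecker

/-- The `(q+1) × (q+1)` Paley conference-type matrix, indexed by `{∞} ∪ 𝔽_q`
(here `none = ∞`): `C_{∞,∞} = 0`, `C_{∞,b} = C_{a,∞} = 1`, `C_{a,b} = χ(a−b)`. -/
def paleyC (F : Type*) [Field F] [Fintype F] [DecidableEq F] :
    Matrix (Option F) (Option F) ℤ :=
  Matrix.of fun a b =>
    match a, b with
    | none, none => 0
    | none, some _ => 1
    | some _, none => 1
    | some a, some b => (quadraticChar F (a - b) : ℤ)

/-- The Paley type II matrix `H = C ⊗ H₊ + I ⊗ H₋` of size `2(q+1)`. -/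
def paleyII (F : Type*) [Field F] [Fintype F] [DecidableEq F] :
    Matrix (Option F × Fin 2) (Option F × Fin 2) ℤ :=
  paleyC F ⊗ₖ !![1, 1; 1, -1] + (1 : Matrix (Option F) (Option F) ℤ) ⊗ₖ !![1, -1; -1, -1]

open Finset

namespace MulChar.IsQuadratic

lemma apply_mul_apply_self {R R' : Type*} [CommMonoid R] [CommRing R'] {χ : MulChar R R'}
    (hχ : χ.IsQuadratic) {d : R} (hd : IsUnit d) : χ d * χ d = 1 := by
  rw [← mul_apply, ← sq, hχ.sq_eq_one, one_apply hd]

variable {F R : Type*} [Field F] [Fintype F] [CommRing R] {χ : MulChar F R}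

lemma sum_apply_sub_mul_apply_sub_self [DecidableEq F] (hχ : χ.IsQuadratic) (a : F) :
    ∑ c, χ (a - c) * χ (a - c) = Fintype.card F - 1 := by
  calc ∑ c, χ (a - c) * χ (a - c) = ∑ x, (χ ^ 2) x :=
        Fintype.sum_equiv (Equiv.subLeft a) _ _ fun c => by rw [sq, mul_apply]; rfl
    _ = ∑ x, (1 : MulChar F R) x := by rw [hχ.sq_eq_one]
    _ = Fintype.card F - 1 := by
      rw [sum_one_eq_card_units, Fintype.card_units, Nat.cast_sub Fintype.card_pos, Nat.cast_one]

/-- Substituting `c = a - (a - b) x` turns the sum into `χ(-1)` times the Jacobi sum `J(χ, χ)`,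
which is `-χ(-1)` because `χ⁻¹ = χ`. -/
lemma sum_apply_sub_mul_apply_sub_of_ne [IsDomain R] (hχ : χ.IsQuadratic) (hχ₁ : χ ≠ 1)
    {a b : F} (hab : a ≠ b) : ∑ c, χ (a - c) * χ (b - c) = -1 := by
  have hd : a - b ≠ 0 := sub_ne_zero.mpr hab
  let e : F ≃ F := (Equiv.mulLeft₀ (a - b) hd).trans (Equiv.subLeft a)
  have hterm : ∀ x, χ (a - e x) * χ (b - e x) = χ (-1) * (χ x * χ (1 - x)) := fun x => by
    have h₁ : a - e x = (a - b) * x := by simp [e]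
    have h₂ : b - e x = -1 * (a - b) * (1 - x) := by simp [e]; ring
    rw [h₁, h₂, map_mul, map_mul, map_mul]
    linear_combination (χ (-1) * χ x * χ (1 - x)) * hχ.apply_mul_apply_self hd.isUnit
  have hJ : jacobiSum χ χ = -χ (-1) := by
    simpa only [hχ.inv] using jacobiSum_nontrivial_inv hχ₁
  rw [← Equiv.sum_comp e, Fintype.sum_congr _ _ hterm, ← mul_sum]
  change χ (-1) * jacobiSum χ χ = -1
  rw [hJ, mul_neg, hχ.apply_mul_apply_self isUnit_one.neg]

end MulChar.IsQuadratic

section Paley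

variable {F : Type*} [Field F] [Fintype F] [DecidableEq F]

lemma quadraticChar_sum_sub_eq_zero (hF : ringChar F ≠ 2) (a : F) :
    ∑ c, quadraticChar F (a - c) = 0 :=
  ((Equiv.subLeft a).sum_comp (quadraticChar F)).trans (quadraticChar_sum_zero hF)

lemma paleyC_apply_self (a : Option F) : paleyC F a a = 0 := by
  cases a <;> simp [paleyC]

lemma isUnit_paleyC_apply {a b : Option F} (hab : a ≠ b) : IsUnit (paleyC F a b) := by
  rcases a with _ | a <;> rcases b with _ | b
  · exact absurd rfl hab
  · exact isUnit_one
  · exact isUnit_one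
  · exact (Ne.isUnit (sub_ne_zero.mpr fun h => hab (congrArg some h))).map (quadraticChar F)

lemma paleyC_isSymm (h : quadraticChar F (-1) = 1) : (paleyC F).IsSymm := by
  ext a b
  rcases a with _ | a <;> rcases b with _ | b <;>
    simp only [Matrix.transpose_apply, paleyC, Matrix.of_apply]
  rw [← neg_sub, neg_eq_neg_one_mul, map_mul, h, one_mul]

lemma paleyC_mul_transpose (hF : ringChar F ≠ 2) :
    paleyC F * (paleyC F)ᵀ = (Fintype.card F : ℤ) • 1 := by
  ext a b
  rw [Matrix.mul_apply, Fintype.sum_option]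
  rcases a with _ | a <;> rcases b with _ | b
  · simp [paleyC]
  · simpa [paleyC] using quadraticChar_sum_sub_eq_zero hF b
  · simpa [paleyC] using quadraticChar_sum_sub_eq_zero hF a
  · simp only [paleyC, Matrix.transpose_apply, Matrix.of_apply, Matrix.smul_apply,
      Matrix.one_apply, Option.some_inj, smul_eq_mul]
    by_cases hab : a = b
    · rw [if_pos hab, ← hab, (quadraticChar_isQuadratic F).sum_apply_sub_mul_apply_sub_self]
      ring
    · rw [if_neg hab, (quadraticChar_isQuadratic F).sum_apply_sub_mul_apply_sub_of_ne
        (quadraticChar_ne_one hF) hab]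
      ring

end Paley

namespace Matrix

variable {R ι κ : Type*} [DecidableEq ι]

lemma kronecker_add_one_kronecker_mul_transpose [CommRing R] [Fintype ι] [Fintype κ]
    [DecidableEq κ] {C : Matrix ι ι R} {A B : Matrix κ κ R}
    {c a b : R} (hC : C.IsSymm) (hCC : C * Cᵀ = c • 1) (hAA : A * Aᵀ = a • 1)
    (hBB : B * Bᵀ = b • 1) (hAB : A * Bᵀ + B * Aᵀ = 0) :
    (C ⊗ₖ A + 1 ⊗ₖ B) * (C ⊗ₖ A + 1 ⊗ₖ B)ᵀ = (c * a + b) • 1 := by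
  have hexpand : (C ⊗ₖ A + 1 ⊗ₖ B) * (C ⊗ₖ A + 1 ⊗ₖ B)ᵀ =
      (C * Cᵀ) ⊗ₖ (A * Aᵀ) + C ⊗ₖ (A * Bᵀ + B * Aᵀ) + (1 : Matrix ι ι R) ⊗ₖ (B * Bᵀ) := by
    rw [transpose_add, ← kroneckerMap_transpose, ← kroneckerMap_transpose, transpose_one,
      hC.eq, add_mul, mul_add, mul_add, ← mul_kronecker_mul, ← mul_kronecker_mul,
      ← mul_kronecker_mul, ← mul_kronecker_mul, Matrix.one_mul, Matrix.one_mul,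
      Matrix.mul_one, kronecker_add]
    abel
  rw [hexpand, hCC, hAA, hBB, hAB, kronecker_zero, add_zero, smul_kronecker, kronecker_smul,
    kronecker_smul, one_kronecker_one, smul_smul, ← add_smul]

lemma isUnit_kronecker_add_one_kronecker_apply [Ring R] {C : Matrix ι ι R}
    {A B : Matrix κ κ R} (hC₀ : ∀ i, C i i = 0) (hC : ∀ i j, i ≠ j → IsUnit (C i j))
    (hA : ∀ k l, IsUnit (A k l)) (hB : ∀ k l, IsUnit (B k l)) :
    ∀ x y, IsUnit ((C ⊗ₖ A + 1 ⊗ₖ B : Matrix (ι × κ) _ R) x y) := by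
  rintro ⟨i, k⟩ ⟨j, l⟩
  simp only [add_apply, kroneckerMap_apply, one_apply]
  by_cases hij : i = j
  · simpa [hij, hC₀] using hB k l
  · simpa [hij] using (hC i j hij).mul (hA k l)

end Matrix

/-- For a prime power `q ≡ 1 (mod 4)` (realized as the cardinality of a finite field
`F`), the Paley type II matrix of size `2(q+1)` is a real Hadamard matrix: every entry
is `1` or `−1` and `H Hᵀ = 2(q+1)·I`. -/
theorem paleyII_isHadamard (F : Type*) [Field F] [Fintype F] [DecidableEq F]
    (hq : Fintype.card F % 4 = 1) :
    (∀ i j, paleyII F i j = 1 ∨ paleyII F i j = -1) ∧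
    paleyII F * (paleyII F)ᵀ =
      (2 * (Fintype.card F + 1) : ℤ) •
        (1 : Matrix (Option F × Fin 2) (Option F × Fin 2) ℤ) := by
  have hF : ringChar F ≠ 2 := fun h => by
    have := FiniteField.even_card_iff_char_two.mp h
    omega
  have hneg : quadraticChar F (-1) = 1 :=
    (quadraticChar_one_iff_isSquare (neg_ne_zero.mpr one_ne_zero)).mpr
      (FiniteField.isSquare_neg_one_iff.mpr (by omega))
  unfold paleyII
  refine ⟨fun x y => Int.isUnit_iff.mp ?_, ?_⟩
  · exact Matrix.isUnit_kronecker_add_one_kronecker_apply paleyC_apply_self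
      (fun _ _ => isUnit_paleyC_apply)
      (fun k l => by fin_cases k <;> fin_cases l <;> simp)
      (fun k l => by fin_cases k <;> fin_cases l <;> simp) x y
  · rw [Matrix.kronecker_add_one_kronecker_mul_transpose (a := 2) (b := 2)
      (paleyC_isSymm hneg) (paleyC_mul_transpose hF) (by decide) (by decide) (by decide)]
    congr 1
    ring
end
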